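/- For i = 1,…,N let f_i : ℝ^{m_i} → ℝ be convex and L_i-smooth, let A_i ∈ ℝ^{m_i×n}, let φ : ℝ^n → (−∞,∞] be proper, closed, and convex, set f(x) := (1/N)∑_{i=1}^N f_i(A_i x), ψ := f + φ, and L̄ := max_{1≤i≤N} L_i‖A_i‖². Suppose x* ∈ argmin_x ψ(x) exists. Fix x, x̃ ∈ dom(φ), let κ(1),…,κ(b) be i.i.d. indices uniform on {1,…,N}, and define u := (1/b)∑_{j=1}^b A_{κ(j)}ᵀ(∇f_{κ(j)}(A_{κ(j)} x) − ∇f_{κ(j)}(A_{κ(j)} x̃)) + ∇f(x̃). Then E‖u − ∇f(x)‖² ≤ (4L̄/b)·(ψ(x) − ψ(x*) + ψ(x̃) − ψ(x*)). -/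

import Mathlib

/-!
Put `ξ_i := A_iᵀ(∇f_i(A_i x) - ∇f_i(A_i x̃))`. The error `u - ∇f(x)` is the mean of `b`
independent copies of the centred variable `ξ_κ - E ξ_κ`, so its second moment is
`(1/b) Var ξ_κ ≤ (1/b) E‖ξ_κ‖²`. Splitting `ξ_i` through `x*`, co-coercivity of the convex
`L_i`-smooth `f_i` bounds `‖A_iᵀ(∇f_i(A_i v) - ∇f_i(A_i x*))‖²` by `2 L_i ‖A_i‖²` times the
Bregman divergence of `f_i` between `A_i v` and `A_i x*`. Averaging over `i` gives
`2 L̄ D_f(v, x*)`, and the optimality condition `0 ≤ ⟪∇f(x*), v - x*⟫ + φ v - φ x*` turns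
`D_f(v, x*)` into at most `ψ(v) - ψ(x*)`.
-/

open scoped RealInnerProductSpace

/-- Expectation (mean) of a random variable on the finite uniform probability space
`Ω = Fin b → Fin N` of `b`-tuples of i.i.d. uniform indices. -/
noncomputable def uniformExp {N b : ℕ} {V : Type*} [AddCommGroup V] [Module ℝ V]
    (X : (Fin b → Fin N) → V) : V :=
  (1 / (N : ℝ) ^ b) • ∑ ω : Fin b → Fin N, X ω

/-- The full gradient `∇f(y) = (1/N) ∑_i A_iᵀ ∇f_i(A_i y)` of
`f(y) = (1/N) ∑_i f_i (A_i y)`. -/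
noncomputable def fullGrad {n N : ℕ} (md : Fin N → ℕ)
    (A : ∀ i : Fin N, EuclideanSpace ℝ (Fin n) →L[ℝ] EuclideanSpace ℝ (Fin (md i)))
    (f' : ∀ i : Fin N, EuclideanSpace ℝ (Fin (md i)) → EuclideanSpace ℝ (Fin (md i)))
    (y : EuclideanSpace ℝ (Fin n)) : EuclideanSpace ℝ (Fin n) :=
  (1 / (N : ℝ)) • ∑ i : Fin N, (A i).adjoint (f' i (A i y))

/-- The variance-reduced (SVRG-type) gradient estimator
`u(ω) = ∇f_S(x) − ∇f_S(x̃) + ∇f(x̃)` for the sampled tuple `S = (ω 1, …, ω b)`. -/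
noncomputable def vrEstimator {n N b : ℕ} (md : Fin N → ℕ)
    (A : ∀ i : Fin N, EuclideanSpace ℝ (Fin n) →L[ℝ] EuclideanSpace ℝ (Fin (md i)))
    (f' : ∀ i : Fin N, EuclideanSpace ℝ (Fin (md i)) → EuclideanSpace ℝ (Fin (md i)))
    (x xt : EuclideanSpace ℝ (Fin n)) (ω : Fin b → Fin N) : EuclideanSpace ℝ (Fin n) :=
  (1 / (b : ℝ)) • (∑ j : Fin b,
      (A (ω j)).adjoint (f' (ω j) (A (ω j) x) - f' (ω j) (A (ω j) xt)))
    + fullGrad md A f' xt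

open Finset Set

noncomputable def bregman {H : Type*} [NormedAddCommGroup H] [InnerProductSpace ℝ H]
    (f : H → ℝ) (g : H → H) (y z : H) : ℝ :=
  f y - f z - ⟪g z, y - z⟫

section SmoothConvex

variable {H : Type*} [NormedAddCommGroup H] [InnerProductSpace ℝ H] [CompleteSpace H]
  {f : H → ℝ} {g : H → H} {L : ℝ}

theorem HasGradientAt.hasDerivAt_comp_lineMap {v a b : H} {t : ℝ}
    (hf : HasGradientAt f v (AffineMap.lineMap a b t)) :
    HasDerivAt (f ∘ AffineMap.lineMap a b) ⟪v, b - a⟫ t := by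
  simpa using (hasGradientAt_iff_hasFDerivAt.1 hf).comp_hasDerivAt t AffineMap.hasDerivAt_lineMap

theorem ConvexOn.bregman_nonneg (hf : ConvexOn ℝ univ f) (hg : ∀ y, HasGradientAt f (g y) y)
    (y z : H) : 0 ≤ bregman f g y z := by
  have hd := (hg (AffineMap.lineMap z y (0 : ℝ))).hasDerivAt_comp_lineMap
  rw [AffineMap.lineMap_apply_zero] at hd
  have hslope := (hf.comp_affineMap (AffineMap.lineMap z y)).le_slope_of_hasDerivAt
    (mem_univ 0) (mem_univ 1) zero_lt_one hd
  simp only [slope_def_field, Function.comp_apply, AffineMap.lineMap_apply_one,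
    AffineMap.lineMap_apply_zero, sub_zero, div_one] at hslope
  unfold bregman
  linarith

theorem bregman_le_of_lipschitz (hg : ∀ y, HasGradientAt f (g y) y)
    (hL : ∀ y z, ‖g y - g z‖ ≤ L * ‖y - z‖) (y z : H) :
    bregman f g y z ≤ L / 2 * ‖y - z‖ ^ 2 := by
  set C := L * ‖y - z‖ ^ 2
  set q : ℝ → ℝ := fun t => f (AffineMap.lineMap z y t) - t * ⟪g z, y - z⟫ - C / 2 * t ^ 2
  have hq : ∀ t, HasDerivAt q (⟪g (AffineMap.lineMap z y t) - g z, y - z⟫ - C * t) t := by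
    intro t
    have h := (((hg (AffineMap.lineMap z y t)).hasDerivAt_comp_lineMap).sub
      ((hasDerivAt_id t).mul_const ⟪g z, y - z⟫)).sub ((hasDerivAt_pow 2 t).const_mul (C / 2))
    exact h.congr_deriv (by rw [inner_sub_left]; ring)
  have hq' : ∀ t ∈ interior (Icc (0 : ℝ) 1), deriv q t ≤ 0 := by
    intro t ht
    rw [interior_Icc] at ht
    have hdist : ‖AffineMap.lineMap z y t - z‖ = t * ‖y - z‖ := by
      rw [← dist_eq_norm, dist_lineMap_left, Real.norm_of_nonneg ht.1.le, dist_eq_norm']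
    have hinner : ⟪g (AffineMap.lineMap z y t) - g z, y - z⟫ ≤ C * t := calc
      _ ≤ ‖g (AffineMap.lineMap z y t) - g z‖ * ‖y - z‖ := real_inner_le_norm _ _
      _ ≤ L * ‖AffineMap.lineMap z y t - z‖ * ‖y - z‖ := by gcongr; exact hL _ _
      _ = C * t := by rw [hdist]; ring
    rw [(hq t).deriv]
    linarith
  have hanti := antitoneOn_of_deriv_nonpos (convex_Icc 0 1)
    (fun t _ => (hq t).continuousAt.continuousWithinAt)
    (fun t _ => (hq t).differentiableAt.differentiableWithinAt) hq'
    (left_mem_Icc.2 zero_le_one) (right_mem_Icc.2 zero_le_one) zero_le_one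
  simp only [q, AffineMap.lineMap_apply_zero, AffineMap.lineMap_apply_one] at hanti
  unfold bregman
  linarith

theorem ConvexOn.norm_sub_sq_le_bregman (hf : ConvexOn ℝ univ f)
    (hg : ∀ y, HasGradientAt f (g y) y) (hL : ∀ y z, ‖g y - g z‖ ≤ L * ‖y - z‖) (y z : H) :
    ‖g y - g z‖ ^ 2 ≤ 2 * L * bregman f g y z := by
  rcases eq_or_ne y z with rfl | hyz
  · simp [bregman]
  have hL0 : 0 ≤ L := nonneg_of_mul_nonneg_left ((norm_nonneg _).trans (hL y z))
    (norm_pos_iff.2 (sub_ne_zero.2 hyz))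
  rcases hL0.eq_or_lt with rfl | hLpos
  · simpa using hL y z
  set G := g y - g z
  -- Compare `f` at `w := y - G / L` from below (convexity at `z`) and above (descent at `y`).
  set w := y - L⁻¹ • G
  have hlow := hf.bregman_nonneg hg w z
  have hup := bregman_le_of_lipschitz hg hL w y
  have hwy : w - y = -(L⁻¹ • G) := by simp [w]
  have hwz : w - z = (y - z) - L⁻¹ • G := by simp only [w]; abel
  have hG : ⟪g y, G⟫ - ⟪g z, G⟫ = ‖G‖ ^ 2 := by
    rw [← inner_sub_left, real_inner_self_eq_norm_sq]
  simp only [bregman, hwy, hwz, inner_neg_right, inner_sub_right, real_inner_smul_right,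
    norm_neg, norm_smul, Real.norm_of_nonneg (inv_nonneg.2 hLpos.le)] at hlow hup ⊢
  field_simp at hup hlow ⊢
  nlinarith

end SmoothConvex

section Optimality

variable {H : Type*} [NormedAddCommGroup H] [InnerProductSpace ℝ H] [CompleteSpace H]

theorem inner_add_sub_nonneg_of_forall_le {F φ : H → ℝ} {D : Set H} {x v g : H}
    (hF : HasGradientAt F g x) (hφ : ConvexOn ℝ D φ) (hx : x ∈ D)
    (hmin : ∀ y ∈ D, F x + φ x ≤ F y + φ y) (hv : v ∈ D) :
    0 ≤ ⟪g, v - x⟫ + (φ v - φ x) := by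
  -- Along the segment `φ` lies below its chord, so `q` is minimal on `[0, 1]` at `0`.
  set q : ℝ → ℝ := fun t => F (AffineMap.lineMap x v t) + t * (φ v - φ x)
  have hq : HasDerivAt q (⟪g, v - x⟫ + (φ v - φ x)) 0 := by
    have hFx : HasGradientAt F g (AffineMap.lineMap x v (0 : ℝ)) := by simpa using hF
    exact (hFx.hasDerivAt_comp_lineMap.add ((hasDerivAt_id 0).mul_const _)).congr_deriv
      (by simp)
  have hqmin : IsMinOn q (Icc 0 1) 0 := by
    intro t ht
    have hφt : φ (AffineMap.lineMap x v t) ≤ (1 - t) * φ x + t * φ v := by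
      rw [AffineMap.lineMap_apply_module]
      exact hφ.2 hx hv (by linarith [ht.2]) ht.1 (by ring)
    have := hmin _ (hφ.1.lineMap_mem hx hv ht)
    show q 0 ≤ q t
    simp only [q, AffineMap.lineMap_apply_zero, zero_mul, add_zero]
    linarith
  have hcone : (1 : ℝ) ∈ posTangentConeAt (Icc 0 1) (0 : ℝ) :=
    mem_posTangentConeAt_of_segment_subset (by simp [segment_eq_Icc])
  simpa using hqmin.localize.hasFDerivWithinAt_nonneg hq.hasDerivWithinAt hcone

end Optimality

theorem mul_opNorm_sq_nonneg_of_lipschitz {E F : Type*} [NormedAddCommGroup E]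
    [NormedSpace ℝ E] [NormedAddCommGroup F] [NormedSpace ℝ F] {g : F → F} {L : ℝ}
    (hL : ∀ y z, ‖g y - g z‖ ≤ L * ‖y - z‖)
    (A : E →L[ℝ] F) : 0 ≤ L * ‖A‖ ^ 2 := by
  rcases eq_or_ne A 0 with rfl | hA
  · simp
  obtain ⟨u, hu⟩ := DFunLike.ne_iff.1 hA
  have hL0 : 0 ≤ L := nonneg_of_mul_nonneg_left ((norm_nonneg _).trans (hL (A u) 0))
    (by simpa using hu)
  positivity

section Adjoint

variable {E F : Type*} [NormedAddCommGroup E] [InnerProductSpace ℝ E] [CompleteSpace E]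
  [NormedAddCommGroup F] [InnerProductSpace ℝ F] [CompleteSpace F]
  {f : F → ℝ} {g : F → F} {L : ℝ}

theorem ConvexOn.norm_adjoint_sub_sq_le_bregman (hf : ConvexOn ℝ univ f)
    (hg : ∀ y, HasGradientAt f (g y) y) (hL : ∀ y z, ‖g y - g z‖ ≤ L * ‖y - z‖)
    (A : E →L[ℝ] F) (y z : E) :
    ‖A.adjoint (g (A y) - g (A z))‖ ^ 2 ≤ 2 * (L * ‖A‖ ^ 2) * bregman f g (A y) (A z) := by
  have hadj : ‖A.adjoint (g (A y) - g (A z))‖ ≤ ‖A‖ * ‖g (A y) - g (A z)‖ := by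
    simpa using A.adjoint.le_opNorm (g (A y) - g (A z))
  calc ‖A.adjoint (g (A y) - g (A z))‖ ^ 2 ≤ ‖A‖ ^ 2 * ‖g (A y) - g (A z)‖ ^ 2 := by
        rw [← mul_pow]; gcongr
    _ ≤ ‖A‖ ^ 2 * (2 * L * bregman f g (A y) (A z)) := by
        gcongr; exact hf.norm_sub_sq_le_bregman hg hL _ _
    _ = 2 * (L * ‖A‖ ^ 2) * bregman f g (A y) (A z) := by ring

end Adjoint

theorem norm_sub_sq_le {E : Type*} [SeminormedAddCommGroup E] (a b : E) :
    ‖a - b‖ ^ 2 ≤ 2 * ‖a‖ ^ 2 + 2 * ‖b‖ ^ 2 := by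
  have := pow_le_pow_left₀ (norm_nonneg _) (norm_sub_le a b) 2
  linarith [add_sq_le (a := ‖a‖) (b := ‖b‖)]

section SampleMean

variable {H : Type*} [NormedAddCommGroup H] [InnerProductSpace ℝ H]

theorem sum_norm_sub_sq_of_sum_eq {ι : Type*} [Fintype ι] (ξ : ι → H) {μ : H}
    (hμ : ∑ i, ξ i = (Fintype.card ι : ℝ) • μ) :
    ∑ i, ‖ξ i - μ‖ ^ 2 = ∑ i, ‖ξ i‖ ^ 2 - Fintype.card ι * ‖μ‖ ^ 2 := by
  simp only [norm_sub_sq_real, sum_add_distrib, sum_sub_distrib, ← mul_sum, ← sum_inner, hμ,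
    real_inner_smul_left, real_inner_self_eq_norm_sq, sum_const, card_univ, nsmul_eq_mul]
  ring

theorem sum_pi_norm_sum_sq_of_sum_eq_zero {ι : Type*} [Fintype ι] {c : ι → H}
    (hc : ∑ i, c i = 0) (b : ℕ) :
    (Fintype.card ι : ℝ) * ∑ ω : Fin b → ι, ‖∑ j, c (ω j)‖ ^ 2
      = b * Fintype.card ι ^ b * ∑ i, ‖c i‖ ^ 2 := by
  induction b with
  | zero => simp
  | succ b ih =>
    have hsplit : ∑ ω : Fin (b + 1) → ι, ‖∑ j, c (ω j)‖ ^ 2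
        = ∑ i, ∑ ρ : Fin b → ι, ‖c i + ∑ j, c (ρ j)‖ ^ 2 := by
      rw [← (Fin.consEquiv fun _ => ι).sum_comp, Fintype.sum_prod_type]
      simp [Fin.consEquiv, Fin.sum_univ_succ]
    -- The cross terms vanish because `c` has mean zero.
    have hcross : ∑ i, ∑ ρ : Fin b → ι, ⟪c i, ∑ j, c (ρ j)⟫ = 0 := by
      simp [← inner_sum, ← sum_inner, hc]
    rw [hsplit]
    simp only [norm_add_sq_real, sum_add_distrib, ← mul_sum, hcross, sum_const, card_univ,
      Fintype.card_pi, prod_const, Fintype.card_fin, nsmul_eq_mul]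
    push_cast
    linear_combination (Fintype.card ι : ℝ) * ih

theorem uniformExp_norm_sq_sampleMean {N b : ℕ} (hN : 0 < N) {c : Fin N → H}
    (hc : ∑ i, c i = 0) :
    uniformExp (fun ω : Fin b → Fin N => ‖(1 / (b : ℝ)) • ∑ j, c (ω j)‖ ^ 2)
      = 1 / (b * N) * ∑ i, ‖c i‖ ^ 2 := by
  rcases Nat.eq_zero_or_pos b with rfl | hb
  · simp [uniformExp]
  have h := sum_pi_norm_sum_sq_of_sum_eq_zero hc b
  rw [Fintype.card_fin] at h
  simp only [uniformExp, norm_smul, mul_pow, ← mul_sum, smul_eq_mul, Real.norm_eq_abs, sq_abs]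
  field_simp
  linear_combination h

end SampleMean

section Estimator

variable {n N : ℕ} (md : Fin N → ℕ)
  (A : ∀ i : Fin N, EuclideanSpace ℝ (Fin n) →L[ℝ] EuclideanSpace ℝ (Fin (md i)))
  (f' : ∀ i : Fin N, EuclideanSpace ℝ (Fin (md i)) → EuclideanSpace ℝ (Fin (md i)))

theorem fullGrad_sub_fullGrad (x y : EuclideanSpace ℝ (Fin n)) :
    fullGrad md A f' x - fullGrad md A f' y
      = (1 / (N : ℝ)) • ∑ i, (A i).adjoint (f' i (A i x) - f' i (A i y)) := by
  simp only [fullGrad, ← smul_sub, ← sum_sub_distrib, map_sub]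

theorem vrEstimator_sub_fullGrad {b : ℕ} (hb : b ≠ 0) (x xt : EuclideanSpace ℝ (Fin n))
    (ω : Fin b → Fin N) :
    vrEstimator md A f' x xt ω - fullGrad md A f' x
      = (1 / (b : ℝ)) • ∑ j, ((A (ω j)).adjoint (f' (ω j) (A (ω j) x) - f' (ω j) (A (ω j) xt))
          - (fullGrad md A f' x - fullGrad md A f' xt)) := by
  rw [sum_sub_distrib, sum_const, card_univ, Fintype.card_fin, ← Nat.cast_smul_eq_nsmul ℝ,
    smul_sub, smul_smul, one_div_mul_cancel (Nat.cast_ne_zero.2 hb), one_smul, vrEstimator]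
  abel

theorem uniformExp_norm_sq_vrEstimator_sub_fullGrad_le {b : ℕ} (hN : 0 < N) (hb : 0 < b)
    (x xt : EuclideanSpace ℝ (Fin n)) :
    uniformExp (fun ω : Fin b → Fin N => ‖vrEstimator md A f' x xt ω - fullGrad md A f' x‖ ^ 2)
      ≤ 1 / (b * N) * ∑ i, ‖(A i).adjoint (f' i (A i x) - f' i (A i xt))‖ ^ 2 := by
  set ξ := fun i => (A i).adjoint (f' i (A i x) - f' i (A i xt))
  set μ := fullGrad md A f' x - fullGrad md A f' xt with hμdef
  have hμ : ∑ i, ξ i = (Fintype.card (Fin N) : ℝ) • μ := by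
    rw [hμdef, fullGrad_sub_fullGrad, Fintype.card_fin, smul_smul,
      mul_one_div_cancel (Nat.cast_ne_zero.2 hN.ne'), one_smul]
  have hc : ∑ i, (ξ i - μ) = 0 := by
    rw [sum_sub_distrib, hμ, sum_const, card_univ, Nat.cast_smul_eq_nsmul, sub_self]
  simp_rw [vrEstimator_sub_fullGrad md A f' hb.ne']
  rw [uniformExp_norm_sq_sampleMean hN hc, sum_norm_sub_sq_of_sum_eq ξ hμ]
  gcongr
  exact sub_le_self _ (by positivity)

end Estimator

section Composite

variable {n N : ℕ} (md : Fin N → ℕ)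
  (A : ∀ i : Fin N, EuclideanSpace ℝ (Fin n) →L[ℝ] EuclideanSpace ℝ (Fin (md i)))
  (f : ∀ i : Fin N, EuclideanSpace ℝ (Fin (md i)) → ℝ)
  (f' : ∀ i : Fin N, EuclideanSpace ℝ (Fin (md i)) → EuclideanSpace ℝ (Fin (md i)))

noncomputable def avgLoss (y : EuclideanSpace ℝ (Fin n)) : ℝ :=
  (1 / (N : ℝ)) * ∑ i, f i (A i y)

variable {f f'}

theorem hasGradientAt_avgLoss (hgrad : ∀ i y, HasGradientAt (f i) (f' i y) y)
    (y : EuclideanSpace ℝ (Fin n)) :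
    HasGradientAt (avgLoss md A f) (fullGrad md A f' y) y := by
  have hi : ∀ i, HasFDerivAt (fun y => f i (A i y))
      ((InnerProductSpace.toDual ℝ _ (f' i (A i y))).comp (A i)) y :=
    fun i => (hasGradientAt_iff_hasFDerivAt.1 (hgrad i (A i y))).comp y (A i).hasFDerivAt
  rw [hasGradientAt_iff_hasFDerivAt]
  refine ((HasFDerivAt.fun_sum (u := univ) fun i _ => hi i).const_mul
    (1 / (N : ℝ))).congr_fderiv ?_
  ext w
  simp [fullGrad, ContinuousLinearMap.adjoint_inner_left]

theorem bregman_avgLoss (y z : EuclideanSpace ℝ (Fin n)) :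
    bregman (avgLoss md A f) (fullGrad md A f') y z
      = (1 / (N : ℝ)) * ∑ i, bregman (f i) (f' i) (A i y) (A i z) := by
  simp only [bregman, avgLoss, fullGrad, real_inner_smul_left, sum_inner,
    ContinuousLinearMap.adjoint_inner_left, map_sub, sum_sub_distrib]
  ring

theorem sum_norm_adjoint_sq_le_bregman_avgLoss {Li : Fin N → ℝ} {Lbar : ℝ}
    (hgrad : ∀ i y, HasGradientAt (f i) (f' i y) y)
    (hLip : ∀ i y z, ‖f' i y - f' i z‖ ≤ Li i * ‖y - z‖)
    (hconv : ∀ i, ConvexOn ℝ univ (f i)) (hLbar : ∀ i, Li i * ‖A i‖ ^ 2 ≤ Lbar)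
    (y z : EuclideanSpace ℝ (Fin n)) :
    (1 / (N : ℝ)) * ∑ i, ‖(A i).adjoint (f' i (A i y) - f' i (A i z))‖ ^ 2
      ≤ 2 * Lbar * bregman (avgLoss md A f) (fullGrad md A f') y z := by
  rw [bregman_avgLoss, mul_left_comm, mul_sum _ _ (2 * Lbar)]
  refine mul_le_mul_of_nonneg_left (sum_le_sum fun i _ => ?_)
    (by positivity : (0 : ℝ) ≤ 1 / (N : ℝ))
  calc ‖(A i).adjoint (f' i (A i y) - f' i (A i z))‖ ^ 2
      ≤ 2 * (Li i * ‖A i‖ ^ 2) * bregman (f i) (f' i) (A i y) (A i z) :=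
        (hconv i).norm_adjoint_sub_sq_le_bregman (hgrad i) (hLip i) (A i) y z
    _ ≤ 2 * Lbar * bregman (f i) (f' i) (A i y) (A i z) := by
        gcongr
        · exact (hconv i).bregman_nonneg (hgrad i) _ _
        · exact hLbar i

theorem sum_norm_adjoint_sq_le_objective_gap {Li : Fin N → ℝ} {Lbar : ℝ}
    (hgrad : ∀ i y, HasGradientAt (f i) (f' i y) y)
    (hLip : ∀ i y z, ‖f' i y - f' i z‖ ≤ Li i * ‖y - z‖)
    (hconv : ∀ i, ConvexOn ℝ univ (f i)) (hLbar : ∀ i, Li i * ‖A i‖ ^ 2 ≤ Lbar)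
    (hLbar0 : 0 ≤ Lbar) {D : Set (EuclideanSpace ℝ (Fin n))}
    {φ : EuclideanSpace ℝ (Fin n) → ℝ} (hφ : ConvexOn ℝ D φ) {xstar v : EuclideanSpace ℝ (Fin n)}
    (hxstarD : xstar ∈ D)
    (hxstar : ∀ y ∈ D, avgLoss md A f xstar + φ xstar ≤ avgLoss md A f y + φ y)
    (hv : v ∈ D) :
    (1 / (N : ℝ)) * ∑ i, ‖(A i).adjoint (f' i (A i v) - f' i (A i xstar))‖ ^ 2
      ≤ 2 * Lbar * (avgLoss md A f v + φ v - (avgLoss md A f xstar + φ xstar)) := by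
  have hopt := inner_add_sub_nonneg_of_forall_le (hasGradientAt_avgLoss md A hgrad xstar)
    hφ hxstarD hxstar hv
  refine (sum_norm_adjoint_sq_le_bregman_avgLoss md A hgrad hLip hconv hLbar v xstar).trans ?_
  gcongr
  unfold bregman
  linarith

end Composite

theorem vr_estimator_variance_convex_general (n N b : ℕ) (hN : 0 < N) (hb : 0 < b)
    (md : Fin N → ℕ)
    (A : ∀ i : Fin N, EuclideanSpace ℝ (Fin n) →L[ℝ] EuclideanSpace ℝ (Fin (md i)))
    (f : ∀ i : Fin N, EuclideanSpace ℝ (Fin (md i)) → ℝ)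
    (f' : ∀ i : Fin N, EuclideanSpace ℝ (Fin (md i)) → EuclideanSpace ℝ (Fin (md i)))
    (Li : Fin N → ℝ)
    (hgrad : ∀ i y, HasGradientAt (f i) (f' i y) y)
    (hLip : ∀ i y z, ‖f' i y - f' i z‖ ≤ Li i * ‖y - z‖)
    (hconv : ∀ i, ConvexOn ℝ Set.univ (f i))
    (D : Set (EuclideanSpace ℝ (Fin n))) (φ : EuclideanSpace ℝ (Fin n) → ℝ)
    (hφconv : ConvexOn ℝ D φ)
    (xstar : EuclideanSpace ℝ (Fin n)) (hxstarD : xstar ∈ D)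
    (hxstar : ∀ y ∈ D,
      (1 / (N : ℝ)) * (∑ i : Fin N, f i (A i xstar)) + φ xstar ≤
        (1 / (N : ℝ)) * (∑ i : Fin N, f i (A i y)) + φ y)
    (x xt : EuclideanSpace ℝ (Fin n)) (hx : x ∈ D) (hxt : xt ∈ D) :
    uniformExp (fun ω : Fin b → Fin N =>
        ‖vrEstimator md A f' x xt ω - fullGrad md A f' x‖ ^ 2) ≤
      (4 * (⨆ j : Fin N, Li j * ‖A j‖ ^ 2) / (b : ℝ)) *
        (((1 / (N : ℝ)) * (∑ i : Fin N, f i (A i x)) + φ x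
            - ((1 / (N : ℝ)) * (∑ i : Fin N, f i (A i xstar)) + φ xstar))
          + ((1 / (N : ℝ)) * (∑ i : Fin N, f i (A i xt)) + φ xt
            - ((1 / (N : ℝ)) * (∑ i : Fin N, f i (A i xstar)) + φ xstar))) := by
  set Lbar := ⨆ j : Fin N, Li j * ‖A j‖ ^ 2
  have hLbar : ∀ i, Li i * ‖A i‖ ^ 2 ≤ Lbar := le_ciSup (Set.finite_range _).bddAbove
  have hLbar0 : 0 ≤ Lbar := (mul_opNorm_sq_nonneg_of_lipschitz (hLip ⟨0, hN⟩) _).trans (hLbar _)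
  have hgap {v} (hv : v ∈ D) := sum_norm_adjoint_sq_le_objective_gap md A hgrad hLip hconv hLbar
    hLbar0 hφconv hxstarD hxstar hv
  calc _ ≤ 1 / (b * N) * ∑ i, ‖(A i).adjoint (f' i (A i x) - f' i (A i xt))‖ ^ 2 :=
        uniformExp_norm_sq_vrEstimator_sub_fullGrad_le md A f' hN hb x xt
    _ ≤ 1 / (b * N) * ∑ i, (2 * ‖(A i).adjoint (f' i (A i x) - f' i (A i xstar))‖ ^ 2
          + 2 * ‖(A i).adjoint (f' i (A i xt) - f' i (A i xstar))‖ ^ 2) := by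
        gcongr with i
        rw [← sub_sub_sub_cancel_right _ _ (f' i (A i xstar)), map_sub]
        exact norm_sub_sq_le _ _
    _ = 2 / b * ((1 / N) * ∑ i, ‖(A i).adjoint (f' i (A i x) - f' i (A i xstar))‖ ^ 2
          + (1 / N) * ∑ i, ‖(A i).adjoint (f' i (A i xt) - f' i (A i xstar))‖ ^ 2) := by
        rw [sum_add_distrib, ← mul_sum, ← mul_sum]
        field_simp
    _ ≤ 2 / b * (2 * Lbar * (avgLoss md A f x + φ x - (avgLoss md A f xstar + φ xstar))
          + 2 * Lbar * (avgLoss md A f xt + φ xt - (avgLoss md A f xstar + φ xstar))) :=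
        mul_le_mul_of_nonneg_left (add_le_add (hgap hx) (hgap hxt)) (by positivity)
    _ = _ := by
        unfold avgLoss
        ring

/-- **Variance bound for the SVRG estimator (convex composite case).**
For `i = 1,…,N` let `f_i` be convex and `L_i`-smooth, `A_i` linear, let `φ` be proper,
closed, convex (domain `D`, real values `φ` on `D`, closed epigraph),
`f(x) := (1/N)∑ f_i(A_i x)`, `ψ := f + φ`, `L̄ := max_i L_i‖A_i‖²`, and suppose a
minimizer `x*` of `ψ` exists.  Fix `x, x̃ ∈ dom φ`, let `κ(1),…,κ(b)` be i.i.d. indices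
uniform on `{1,…,N}` and let `u := ∇f_S(x) − ∇f_S(x̃) + ∇f(x̃)`.  Then
`E‖u − ∇f(x)‖² ≤ (4L̄/b)(ψ(x) − ψ(x*) + ψ(x̃) − ψ(x*))`. -/
theorem vr_estimator_variance_convex (n N b : ℕ) (hN : 0 < N) (hb : 0 < b)
    (md : Fin N → ℕ)
    (A : ∀ i : Fin N, EuclideanSpace ℝ (Fin n) →L[ℝ] EuclideanSpace ℝ (Fin (md i)))
    (f : ∀ i : Fin N, EuclideanSpace ℝ (Fin (md i)) → ℝ)
    (f' : ∀ i : Fin N, EuclideanSpace ℝ (Fin (md i)) → EuclideanSpace ℝ (Fin (md i)))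
    (Li : Fin N → ℝ)
    (hgrad : ∀ i y, HasGradientAt (f i) (f' i y) y)
    (hLip : ∀ i y z, ‖f' i y - f' i z‖ ≤ Li i * ‖y - z‖)
    (hconv : ∀ i, ConvexOn ℝ Set.univ (f i))
    (D : Set (EuclideanSpace ℝ (Fin n))) (φ : EuclideanSpace ℝ (Fin n) → ℝ)
    (hD : D.Nonempty) (hφconv : ConvexOn ℝ D φ)
    (hφclosed : IsClosed {q : EuclideanSpace ℝ (Fin n) × ℝ | q.1 ∈ D ∧ φ q.1 ≤ q.2})
    (xstar : EuclideanSpace ℝ (Fin n)) (hxstarD : xstar ∈ D)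
    (hxstar : ∀ y ∈ D,
      (1 / (N : ℝ)) * (∑ i : Fin N, f i (A i xstar)) + φ xstar ≤
        (1 / (N : ℝ)) * (∑ i : Fin N, f i (A i y)) + φ y)
    (x xt : EuclideanSpace ℝ (Fin n)) (hx : x ∈ D) (hxt : xt ∈ D) :
    uniformExp (fun ω : Fin b → Fin N =>
        ‖vrEstimator md A f' x xt ω - fullGrad md A f' x‖ ^ 2) ≤
      (4 * (⨆ j : Fin N, Li j * ‖A j‖ ^ 2) / (b : ℝ)) *
        (((1 / (N : ℝ)) * (∑ i : Fin N, f i (A i x)) + φ x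
            - ((1 / (N : ℝ)) * (∑ i : Fin N, f i (A i xstar)) + φ xstar))
          + ((1 / (N : ℝ)) * (∑ i : Fin N, f i (A i xt)) + φ xt
            - ((1 / (N : ℝ)) * (∑ i : Fin N, f i (A i xstar)) + φ xstar))) :=
  vr_estimator_variance_convex_general n N b hN hb md A f f' Li hgrad hLip hconv D φ hφconv xstar
    hxstarD hxstar x xt hx hxt
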